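/- Let d > m ≥ 1 be integers, t, c ∈ ℂ \ {0}, and Q(z) = t·z^d + c·z^m. If θ ∈ ℝ is such that t·e^{i(d+2)θ} is a positive real number (L(θ) is an anti-Stokes ray of t z^d) and c·e^{i(m+2)θ} is not a negative real number (L(θ) is not a Stokes line of c z^m), then θ is a good ray for Q. -/

import Mathlib

/-!
On the ray `z = r e^{iθ}` one has
`z² Q(z) = r^{d+2} · t e^{i(d+2)θ} + r^{m+2} · c e^{i(m+2)θ}`.
On an anti-Stokes ray of `t z^d` the first summand is a positive real, so `z² Q(z)` can only be
a nonpositive real if `c e^{i(m+2)θ}` is a negative real, i.e. if the ray is a Stokes line of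
`c z^m`. This gives (iv), and (iii) is the special case `z² Q(z) = 0`.
-/

open Complex

/-- The direction `θ` (i.e. the ray `L(θ) = {r e^{iθ} : r > 0}`) is a *good ray* for the
binomial `Q(z) = t z^d + c z^m`:
(i) `L(θ)` is not a Stokes line of `t z^d dz²`;
(ii) `L(θ)` is not a Stokes line of `c z^m dz²`;
(iii) `L(θ)` contains no turning point of `Q`;
(iv) `L(θ)` is not tangent to any vertical trajectory of `Q(z)dz²`. -/
def GoodRay (d m : ℕ) (t c : ℂ) (θ : ℝ) : Prop :=
  (¬ ∃ x : ℝ, x < 0 ∧ t * Complex.exp ((((d : ℝ) + 2) * θ : ℂ) * Complex.I) = (x : ℂ)) ∧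
  (¬ ∃ x : ℝ, x < 0 ∧ c * Complex.exp ((((m : ℝ) + 2) * θ : ℂ) * Complex.I) = (x : ℂ)) ∧
  (∀ r : ℝ, 0 < r →
    t * ((r : ℂ) * Complex.exp ((θ : ℂ) * Complex.I)) ^ d +
      c * ((r : ℂ) * Complex.exp ((θ : ℂ) * Complex.I)) ^ m ≠ 0) ∧
  (∀ r : ℝ, 0 < r → ¬ ∃ x : ℝ, x ≤ 0 ∧
    ((r : ℂ) * Complex.exp ((θ : ℂ) * Complex.I)) ^ 2 *
      (t * ((r : ℂ) * Complex.exp ((θ : ℂ) * Complex.I)) ^ d +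
       c * ((r : ℂ) * Complex.exp ((θ : ℂ) * Complex.I)) ^ m) = (x : ℂ))

lemma exp_natCast_add_two_mul_I (n : ℕ) (θ : ℝ) :
    exp ((((n : ℝ) + 2) * θ : ℂ) * I) = exp ((θ : ℂ) * I) ^ (n + 2) := by
  rw [← exp_nat_mul]
  push_cast
  ring_nf

lemma exists_neg_eq_of_add_mul_eq_nonpos {s q x : ℝ} {B : ℂ} (hs : 0 < s) (hq : 0 < q)
    (hx : x ≤ 0) (h : (s : ℂ) + B * q = x) : ∃ y : ℝ, y < 0 ∧ B = y := by
  refine ⟨(x - s) / q, div_neg_of_neg_of_pos (by linarith) hq, ?_⟩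
  rw [ofReal_div, eq_div_iff (ofReal_ne_zero.mpr hq.ne'), ofReal_sub, ← h]
  ring

lemma sq_mul_binomial_ne_nonpos_of_antiStokes {d m : ℕ} {t c : ℂ} {θ r : ℝ} (hr : 0 < r)
    (hanti : ∃ x : ℝ, 0 < x ∧ t * exp ((((d : ℝ) + 2) * θ : ℂ) * I) = x)
    (hnotStokes : ¬ ∃ x : ℝ, x < 0 ∧ c * exp ((((m : ℝ) + 2) * θ : ℂ) * I) = x) :
    ¬ ∃ x : ℝ, x ≤ 0 ∧ ((r : ℂ) * exp ((θ : ℂ) * I)) ^ 2 *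
      (t * ((r : ℂ) * exp ((θ : ℂ) * I)) ^ d + c * ((r : ℂ) * exp ((θ : ℂ) * I)) ^ m) = x := by
  rintro ⟨x, hx, hzQ⟩
  obtain ⟨a, ha, hta⟩ := hanti
  rw [exp_natCast_add_two_mul_I] at hta hnotStokes
  refine hnotStokes (exists_neg_eq_of_add_mul_eq_nonpos (s := a * r ^ (d + 2))
    (q := r ^ (m + 2)) (by positivity) (by positivity) hx ?_)
  rw [← hzQ]
  push_cast
  rw [← hta]
  ring

theorem antiStokes_ray_is_good
    (d m : ℕ)
    (t c : ℂ) (θ : ℝ)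
    (hanti : ∃ x : ℝ, 0 < x ∧
      t * Complex.exp ((((d : ℝ) + 2) * θ : ℂ) * Complex.I) = (x : ℂ))
    (hnotStokes : ¬ ∃ x : ℝ, x < 0 ∧
      c * Complex.exp ((((m : ℝ) + 2) * θ : ℂ) * Complex.I) = (x : ℂ)) :
    GoodRay d m t c θ := by
  have hvertical := fun r (hr : 0 < r) ↦
    sq_mul_binomial_ne_nonpos_of_antiStokes (r := r) hr hanti hnotStokes
  refine ⟨?_, hnotStokes, fun r hr hQ ↦ hvertical r hr ⟨0, le_rfl, by simp [hQ]⟩, hvertical⟩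
  rintro ⟨x, hx, htx⟩
  obtain ⟨a, ha, hta⟩ := hanti
  rw [hta, ofReal_inj] at htx
  linarith
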